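/- arXiv:2211.10832 — 3 statements merged into one kernel-verified Lean document; each statement's English description precedes it below -/
import Mathlib

section
/- Let d ≤ 3 and take M = 1. If f : [0,1]^d → ℝ is ρ-Lipschitz in 1-norm, then for every integer t ≥ 1, every index i ∈ {0,…,k−1} and all x, x' ∈ C*_i, the constructed network satisfies |f̂(x) − f̂(x')| ≤ 36ρd/t. -/
open Finset MeasureTheory

noncomputable section

/-- The ReLU function σ(z) = max(0, z). -/
def relu (z : ℝ) : ℝ := max 0 z

/-- `digit d t i r` is the `r`-th digit (most significant first) of the base-(t+1)
representation of `i`, i.e. the vector π^i, so that `i = Σ_r (digit d t i r) * (t+1)^(d-1-r)`. -/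
def digit (d t i : ℕ) (r : Fin d) : ℕ := i / (t + 1) ^ (d - 1 - (r : ℕ)) % (t + 1)

/-- The grid point π^i / t ∈ [0,1]^d. -/
def gridPt (d t i : ℕ) : Fin d → ℝ := fun r => (digit d t i r : ℝ) / t

/-- A g-unit with coefficient `a` located at grid point `i`:
`x ↦ a · σ(Σ_r −M·σ(−x_r + π^i_r/t) + 1/t)`. -/
def gUnit (d t : ℕ) (M a : ℝ) (i : ℕ) (x : Fin d → ℝ) : ℝ :=
  a * relu ((∑ r : Fin d, -M * relu (-(x r) + gridPt d t i r)) + 1 / t)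

/-- `net d t M f i` is the partial network `b + Σ_{j=1}^{i} ĝ_j` of the recursive
construction (with `b = f 0`). -/
def net (d t : ℕ) (M : ℝ) (f : (Fin d → ℝ) → ℝ) : ℕ → (Fin d → ℝ) → ℝ
  | 0 => fun _ => f (fun _ => 0)
  | i + 1 => fun x =>
      net d t M f i x +
        gUnit d t M ((t : ℝ) * (f (gridPt d t (i + 1)) - net d t M f i (gridPt d t (i + 1))))
          (i + 1) x

/-- The coefficient `a_i = t·(f(π^i/t) − (b + Σ_{j=1}^{i−1} ĝ_j(π^i/t)))` of the
construction (meaningful for `i ≥ 1`). -/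
def coef (d t : ℕ) (M : ℝ) (f : (Fin d → ℝ) → ℝ) (i : ℕ) : ℝ :=
  (t : ℝ) * (f (gridPt d t i) - net d t M f (i - 1) (gridPt d t i))

/-- The g-unit `ĝ_i` of the construction. -/
def gHat (d t : ℕ) (M : ℝ) (f : (Fin d → ℝ) → ℝ) (i : ℕ) : (Fin d → ℝ) → ℝ :=
  gUnit d t M (coef d t M f i) i

/-- The constructed network `f̂(x) = b + Σ_{i=1}^{k−1} ĝ_i(x)`, `k = (t+1)^d`. -/
def fHat (d t : ℕ) (M : ℝ) (f : (Fin d → ℝ) → ℝ) (x : Fin d → ℝ) : ℝ :=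
  f (fun _ => 0) + ∑ i ∈ Finset.Icc 1 ((t + 1) ^ d - 1), gHat d t M f i x

/-- `f` is ρ-Lipschitz in 1-norm on the set `s`. -/
def LipOneNorm (d : ℕ) (ρ : ℝ) (s : Set (Fin d → ℝ)) (f : (Fin d → ℝ) → ℝ) : Prop :=
  ∀ x ∈ s, ∀ x' ∈ s, |f x - f x'| ≤ ρ * ∑ r : Fin d, |x r - x' r|

/-- The cell `C*_i = {x : π^i_r/t ≤ x_r ≤ π^i_r/t + 1/t ∀r}`. -/
def cellStar (d t i : ℕ) : Set (Fin d → ℝ) :=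
  {x | ∀ r : Fin d, gridPt d t i r ≤ x r ∧ x r ≤ gridPt d t i r + 1 / t}

/-- The inner cell `C_i = {x : π^i_r/t ≤ x_r ≤ π^i_r/t + 1/t − 1/(Mt) ∀r}`. -/
def cellInner (d t : ℕ) (M : ℝ) (i : ℕ) : Set (Fin d → ℝ) :=
  {x | ∀ r : Fin d, gridPt d t i r ≤ x r ∧ x r ≤ gridPt d t i r + (1 / t - 1 / (M * t))}

/-- The boundary region `C'_i = C*_i \ C_i`. -/
def cellBoundary (d t : ℕ) (M : ℝ) (i : ℕ) : Set (Fin d → ℝ) :=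
  cellStar d t i \ cellInner d t M i


namespace Stmt8


lemma digit_le (d t i : ℕ) (r : Fin d) : digit d t i r ≤ t :=
  Nat.lt_succ_iff.mp (Nat.mod_lt _ (Nat.succ_pos t))

/-- encode a digit vector as an index -/
def enc (d t : ℕ) (π : Fin d → ℕ) : ℕ := ∑ r : Fin d, π r * (t + 1) ^ (d - 1 - (r : ℕ))

lemma sum_range_digits (B i : ℕ) :
    ∀ n, ∑ j ∈ Finset.range n, (i / B ^ j % B) * B ^ j = i % B ^ n := by
  intro n
  induction n with
  | zero => simp [Nat.mod_one]
  | succ n ih =>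
    rw [Finset.sum_range_succ, ih, Nat.mod_pow_succ]
    ring

lemma extract (B : ℕ) (hB : 1 ≤ B) :
    ∀ (m n : ℕ) (c : ℕ → ℕ), (∀ j, j < n → c j < B) → m < n →
      (∑ j ∈ Finset.range n, c j * B ^ j) / B ^ m % B = c m := by
  intro m
  induction m with
  | zero =>
    intro n c hc hm
    obtain ⟨n', rfl⟩ : ∃ n', n = n' + 1 := ⟨n - 1, by omega⟩
    rw [Finset.sum_range_succ']
    simp only [pow_zero, mul_one, Nat.pow_zero, Nat.div_one]
    have h2 : ∑ j ∈ Finset.range n', c (j + 1) * B ^ (j + 1)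
        = B * ∑ j ∈ Finset.range n', c (j + 1) * B ^ j := by
      rw [Finset.mul_sum]; apply Finset.sum_congr rfl; intro j _; ring
    rw [h2, Nat.mul_add_mod]
    exact Nat.mod_eq_of_lt (hc 0 (by omega))
  | succ m ih =>
    intro n c hc hm
    obtain ⟨n', rfl⟩ : ∃ n', n = n' + 1 := ⟨n - 1, by omega⟩
    rw [Finset.sum_range_succ']
    have hrw : ∑ j ∈ Finset.range n', c (j + 1) * B ^ (j + 1)
        = B * ∑ j ∈ Finset.range n', c (j + 1) * B ^ j := by
      rw [Finset.mul_sum]; apply Finset.sum_congr rfl; intro j _; ring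
    have h1 : (B * ∑ j ∈ Finset.range n', c (j + 1) * B ^ j + c 0 * B ^ 0) / B
        = ∑ j ∈ Finset.range n', c (j + 1) * B ^ j := by
      rw [pow_zero, mul_one, Nat.mul_add_div (by omega), Nat.div_eq_of_lt (hc 0 (by omega))]
      omega
    rw [hrw, pow_succ', ← Nat.div_div_eq_div_mul, h1]
    exact ih n' (fun j => c (j + 1)) (fun j hj => hc (j + 1) (by omega)) (by omega)

lemma enc_digit (d t : ℕ) (i : ℕ) (hi : i < (t + 1) ^ d) : enc d t (digit d t i) = i := by
  unfold enc digit
  rw [Fin.sum_univ_eq_sum_range (fun r => i / (t+1) ^ (d - 1 - r) % (t+1) * (t+1) ^ (d - 1 - r))]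
  rw [← Finset.sum_range_reflect]
  have h : ∀ j ∈ Finset.range d,
      i / (t+1) ^ (d - 1 - (d - 1 - j)) % (t+1) * (t+1) ^ (d - 1 - (d - 1 - j))
      = i / (t+1) ^ j % (t+1) * (t+1) ^ j := by
    intro j hj
    rw [Finset.mem_range] at hj
    have he : d - 1 - (d - 1 - j) = j := by omega
    rw [he]
  rw [Finset.sum_congr rfl h, sum_range_digits, Nat.mod_eq_of_lt hi]

/-- total extension of a digit vector -/
def ext (d : ℕ) (π : Fin d → ℕ) (m : ℕ) : ℕ := if h : m < d then π ⟨m, h⟩ else 0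

lemma enc_eq_range (d t : ℕ) (π : Fin d → ℕ) :
    enc d t π = ∑ j ∈ Finset.range d, ext d π (d - 1 - j) * (t + 1) ^ j := by
  unfold enc
  have h0 : ∀ r : Fin d, π r * (t+1) ^ (d - 1 - (r:ℕ)) = ext d π (r:ℕ) * (t+1) ^ (d - 1 - (r:ℕ)) := by
    intro r; simp [ext, r.isLt]
  rw [Finset.sum_congr rfl (fun r _ => h0 r),
    Fin.sum_univ_eq_sum_range (fun r => ext d π r * (t+1) ^ (d - 1 - r)),
    ← Finset.sum_range_reflect]
  apply Finset.sum_congr rfl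
  intro j hj
  rw [Finset.mem_range] at hj
  have he : d - 1 - (d - 1 - j) = j := by omega
  rw [he]

lemma digit_enc (d t : ℕ) (π : Fin d → ℕ) (hπ : ∀ r, π r ≤ t) (r : Fin d) :
    digit d t (enc d t π) r = π r := by
  unfold digit
  rw [enc_eq_range, extract (t+1) (by omega) _ d _ ?_ (by omega)]
  · have : d - 1 - (d - 1 - (r : ℕ)) = (r : ℕ) := by omega
    rw [this]
    simp [ext, r.isLt]
  · intro j hj
    unfold ext
    split
    · exact Nat.lt_succ_of_le (hπ _)
    · omega

lemma enc_lt (d t : ℕ) (π : Fin d → ℕ) (hπ : ∀ r, π r ≤ t) : enc d t π < (t + 1) ^ d := by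
  rw [enc_eq_range]
  have : ∀ n (c : ℕ → ℕ), (∀ j, j < n → c j ≤ t) →
      ∑ j ∈ Finset.range n, c j * (t + 1) ^ j < (t + 1) ^ n := by
    intro n
    induction n with
    | zero => simp
    | succ n ih =>
      intro c hc
      rw [Finset.sum_range_succ, pow_succ]
      have h1 := ih c (fun j hj => hc j (by omega))
      have h2 : c n ≤ t := hc n (by omega)
      nlinarith [pow_pos (Nat.succ_pos t) n]
  apply this
  intro j hj
  unfold ext
  split
  · exact hπ _
  · omega

lemma enc_mono (d t : ℕ) (π π' : Fin d → ℕ) (h : ∀ r, π r ≤ π' r) : enc d t π ≤ enc d t π' :=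
  Finset.sum_le_sum fun r _ => Nat.mul_le_mul_right _ (h r)

lemma index_le (d t m j : ℕ) (hm : m < (t + 1) ^ d) (hj : j < (t + 1) ^ d)
    (h : ∀ r, digit d t m r ≤ digit d t j r) : m ≤ j := by
  rw [← enc_digit d t m hm, ← enc_digit d t j hj]
  exact enc_mono d t _ _ h

lemma relu_nonneg (z : ℝ) : 0 ≤ relu z := le_max_left _ _
lemma relu_of_nonpos {z : ℝ} (h : z ≤ 0) : relu z = 0 := max_eq_left h
lemma relu_of_nonneg {z : ℝ} (h : 0 ≤ z) : relu z = z := max_eq_right h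
lemma le_relu (z : ℝ) : z ≤ relu z := le_max_right _ _
lemma relu_mono : Monotone relu := fun _ _ h => max_le_max le_rfl h

lemma gUnit_grid (d t : ℕ) (ht : 1 ≤ t) (a : ℝ) (m j : ℕ) :
    gUnit d t 1 a m (gridPt d t j)
      = if ∀ r, digit d t m r ≤ digit d t j r then a / t else 0 := by
  have ht' : (0:ℝ) < t := by exact_mod_cast Nat.lt_of_lt_of_le Nat.zero_lt_one ht
  unfold gUnit gridPt
  split
  case isTrue h =>
    have h0 : ∀ r : Fin d,
        -(1:ℝ) * relu (-((digit d t j r : ℝ)/t) + (digit d t m r : ℝ)/t) = 0 := by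
      intro r
      rw [relu_of_nonpos, mul_zero]
      have h1 : (digit d t m r : ℝ) ≤ (digit d t j r : ℝ) := by exact_mod_cast h r
      have h2 : (digit d t m r : ℝ)/t ≤ (digit d t j r : ℝ)/t := by gcongr
      linarith
    rw [Finset.sum_congr rfl (fun r _ => h0 r), Finset.sum_const_zero, zero_add,
      relu_of_nonneg (by positivity)]
    ring
  case isFalse h =>
    push_neg at h
    obtain ⟨r0, hr0⟩ := h
    have hz : relu ((∑ r : Fin d, -(1:ℝ) * relu (-((digit d t j r : ℝ)/t) + (digit d t m r : ℝ)/t)) + 1/t) = 0 := by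
      apply relu_of_nonpos
      have hsum : (1:ℝ)/t ≤ ∑ r : Fin d,
          relu (-((digit d t j r : ℝ)/t) + (digit d t m r : ℝ)/t) := by
        have hterm : (1:ℝ)/t ≤ relu (-((digit d t j r0 : ℝ)/t) + (digit d t m r0 : ℝ)/t) := by
          apply le_trans _ (le_relu _)
          have h1 : (digit d t j r0 : ℝ) + 1 ≤ (digit d t m r0 : ℝ) := by exact_mod_cast hr0
          have h2 : -((digit d t j r0 : ℝ)/t) + (digit d t m r0 : ℝ)/t
              = ((digit d t m r0 : ℝ) - (digit d t j r0 : ℝ))/t := by ring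
          rw [h2]
          exact div_le_div_of_nonneg_right (by linarith) (le_of_lt ht')
        calc (1:ℝ)/t ≤ relu (-((digit d t j r0 : ℝ)/t) + (digit d t m r0 : ℝ)/t) := hterm
        _ ≤ ∑ r : Fin d, relu (-((digit d t j r : ℝ)/t) + (digit d t m r : ℝ)/t) :=
          Finset.single_le_sum
            (f := fun r => relu (-((digit d t j r : ℝ)/t) + (digit d t m r : ℝ)/t))
            (fun r _ => relu_nonneg _) (Finset.mem_univ r0)
      have : ∑ r : Fin d, -(1:ℝ) * relu (-((digit d t j r : ℝ)/t) + (digit d t m r : ℝ)/t)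
          = -∑ r : Fin d, relu (-((digit d t j r : ℝ)/t) + (digit d t m r : ℝ)/t) := by
        rw [← Finset.sum_neg_distrib]
        apply Finset.sum_congr rfl; intro r _; ring
      rw [this]
      linarith
    rw [hz, mul_zero]

lemma net_eq_sum (d t : ℕ) (M : ℝ) (f : (Fin d → ℝ) → ℝ) (i : ℕ) (x : Fin d → ℝ) :
    net d t M f i x = f (fun _ => 0) + ∑ m ∈ Finset.Icc 1 i, gHat d t M f m x := by
  induction i with
  | zero => simp [net]
  | succ i ih =>
    have hnet : net d t M f (i+1) x = net d t M f i x +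
        gUnit d t M ((t : ℝ) * (f (gridPt d t (i + 1)) - net d t M f i (gridPt d t (i + 1))))
          (i + 1) x := rfl
    have hco : coef d t M f (i+1)
        = (t : ℝ) * (f (gridPt d t (i + 1)) - net d t M f i (gridPt d t (i + 1))) := by
      simp [coef]
    rw [hnet, Finset.sum_Icc_succ_top (by omega), ih, gHat, hco]
    ring

lemma gridPt_zero (d t : ℕ) : gridPt d t 0 = fun _ => (0:ℝ) := by
  funext r
  simp [gridPt, digit]

lemma net_interp (d t : ℕ) (ht : 1 ≤ t) (f : (Fin d → ℝ) → ℝ) :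
    ∀ i, i < (t+1)^d → ∀ j ≤ i, net d t 1 f i (gridPt d t j) = f (gridPt d t j) := by
  have ht' : (t:ℝ) ≠ 0 := by positivity
  intro i
  induction i with
  | zero =>
    intro _ j hj
    interval_cases j
    rw [gridPt_zero]
    rfl
  | succ i ih =>
    intro hi j hj
    have hco : coef d t 1 f (i+1)
        = (t : ℝ) * (f (gridPt d t (i + 1)) - net d t 1 f i (gridPt d t (i + 1))) := by
      simp [coef]
    have hnet : net d t 1 f (i+1) (gridPt d t j) = net d t 1 f i (gridPt d t j) +
        gUnit d t 1 (coef d t 1 f (i+1)) (i + 1) (gridPt d t j) := by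
      rw [hco]; rfl
    rw [hnet, gUnit_grid d t ht]
    rcases Nat.lt_or_ge j (i+1) with hj' | hj'
    · rw [if_neg, add_zero, ih (by omega) j (by omega)]
      intro hall
      have := index_le d t (i+1) j hi (by omega) hall
      omega
    · have hji : j = i + 1 := by omega
      subst hji
      rw [if_pos (fun r => le_refl _), hco]
      field_simp
      ring

lemma fHat_grid (d t : ℕ) (ht : 1 ≤ t) (f : (Fin d → ℝ) → ℝ) (j : ℕ) (hj : j < (t+1)^d) :
    fHat d t 1 f (gridPt d t j) = f (gridPt d t j) := by
  have hk : 1 ≤ (t+1)^d := Nat.one_le_pow _ _ (by omega)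
  have h : fHat d t 1 f (gridPt d t j) = net d t 1 f ((t+1)^d - 1) (gridPt d t j) := by
    rw [net_eq_sum]; rfl
  rw [h]
  exact net_interp d t ht f _ (by omega) j (by omega)

lemma downset_sum (d t : ℕ) (ht : 1 ≤ t) (f : (Fin d → ℝ) → ℝ)
    (w : Fin d → ℕ) (hw : ∀ r, w r ≤ t) :
    ∑ m ∈ (Finset.Icc 1 ((t+1)^d - 1)).filter (fun m => ∀ r, digit d t m r ≤ w r),
        coef d t 1 f m
      = (t:ℝ) * (f (fun r => (w r : ℝ)/t) - f (fun _ => 0)) := by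
  have ht' : (t:ℝ) ≠ 0 := by positivity
  set j := enc d t w with hjdef
  have hj : j < (t+1)^d := enc_lt d t w hw
  have hdig : ∀ r, digit d t j r = w r := digit_enc d t w hw
  have hgp : gridPt d t j = fun r => (w r : ℝ)/t := by
    funext r; rw [gridPt, hdig]
  have h1 := fHat_grid d t ht f j hj
  unfold fHat at h1
  have h2 : ∑ m ∈ Finset.Icc 1 ((t+1)^d - 1), gHat d t 1 f m (gridPt d t j)
      = (∑ m ∈ (Finset.Icc 1 ((t+1)^d - 1)).filter (fun m => ∀ r, digit d t m r ≤ w r),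
          coef d t 1 f m) / t := by
    rw [Finset.sum_div, Finset.sum_filter]
    apply Finset.sum_congr rfl
    intro m _
    rw [gHat, gUnit_grid d t ht]
    simp only [hdig]
  rw [h2, hgp] at h1
  field_simp at h1
  linarith

lemma ie_sum (d t : ℕ) (ht : 1 ≤ t) (f : (Fin d → ℝ) → ℝ) (S : Finset (Fin d)) :
    ∀ u : Fin d → ℕ, (∀ r, u r ≤ t) → (∀ r ∈ S, 1 ≤ u r) →
    ∑ m ∈ (Finset.Icc 1 ((t+1)^d - 1)).filter
        (fun m => (∀ r, digit d t m r ≤ u r) ∧ ∀ r ∈ S, digit d t m r = u r),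
      coef d t 1 f m
    = ∑ T ∈ S.powerset, (-1:ℝ)^T.card *
        ((t:ℝ) * (f (fun r => ((u r - if r ∈ T then 1 else 0 : ℕ) : ℝ)/t) - f (fun _ => 0))) := by
  classical
  induction S using Finset.induction_on with
  | empty =>
    intro u hu _
    simp only [Finset.powerset_empty, Finset.sum_singleton, Finset.card_empty, pow_zero, one_mul]
    have hds := downset_sum d t ht f u hu
    have hfc : (Finset.Icc 1 ((t+1)^d - 1)).filter
        (fun m => (∀ r, digit d t m r ≤ u r) ∧ ∀ r ∈ (∅ : Finset (Fin d)), digit d t m r = u r)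
        = (Finset.Icc 1 ((t+1)^d - 1)).filter (fun m => ∀ r, digit d t m r ≤ u r) := by
      apply Finset.filter_congr
      intro m _
      simp
    rw [hfc, hds]
    have : (fun r => ((u r - if r ∈ (∅ : Finset (Fin d)) then 1 else 0 : ℕ) : ℝ)/t)
        = fun r => (u r : ℝ)/t := by
      funext r; simp
    rw [this]
  | @insert r0 S hr0 ih =>
    intro u hu hu1
    set F := Finset.Icc 1 ((t+1)^d - 1) with hF
    set u' : Fin d → ℕ := fun r => if r = r0 then u r0 - 1 else u r with hu'
    have hur0 : 1 ≤ u r0 := hu1 r0 (Finset.mem_insert_self r0 S)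
    have hu'le : ∀ r, u' r ≤ t := by
      intro r; simp only [hu']
      split
      · have := hu r0; omega
      · exact hu r
    have hu'1 : ∀ r ∈ S, 1 ≤ u' r := by
      intro r hr; simp only [hu']
      rw [if_neg (by rintro rfl; exact hr0 hr)]
      exact hu1 r (Finset.mem_insert_of_mem hr)
    have hL : ∑ m ∈ F.filter
          (fun m => (∀ r, digit d t m r ≤ u r) ∧ ∀ r ∈ insert r0 S, digit d t m r = u r),
          coef d t 1 f m
        = (∑ m ∈ F.filter
            (fun m => (∀ r, digit d t m r ≤ u r) ∧ ∀ r ∈ S, digit d t m r = u r),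
            coef d t 1 f m)
          - ∑ m ∈ F.filter
              (fun m => (∀ r, digit d t m r ≤ u' r) ∧ ∀ r ∈ S, digit d t m r = u' r),
              coef d t 1 f m := by
      have h1 : F.filter
          (fun m => (∀ r, digit d t m r ≤ u r) ∧ ∀ r ∈ insert r0 S, digit d t m r = u r)
          = F.filter (fun m => ((∀ r, digit d t m r ≤ u r) ∧ ∀ r ∈ S, digit d t m r = u r)
              ∧ digit d t m r0 = u r0) := by
        apply Finset.filter_congr
        intro m _
        constructor
        · rintro ⟨ha, hb⟩
          exact ⟨⟨ha, fun r hr => hb r (Finset.mem_insert_of_mem hr)⟩,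
            hb r0 (Finset.mem_insert_self _ _)⟩
        · rintro ⟨⟨ha, hb⟩, hc⟩
          refine ⟨ha, fun r hr => ?_⟩
          rcases Finset.mem_insert.mp hr with rfl | hr
          exacts [hc, hb r hr]
      have h2 : F.filter
          (fun m => (∀ r, digit d t m r ≤ u' r) ∧ ∀ r ∈ S, digit d t m r = u' r)
          = F.filter (fun m => ((∀ r, digit d t m r ≤ u r) ∧ ∀ r ∈ S, digit d t m r = u r)
              ∧ ¬(digit d t m r0 = u r0)) := by
        apply Finset.filter_congr
        intro m _
        constructor
        · rintro ⟨ha, hb⟩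
          have hr0le : digit d t m r0 ≤ u r0 - 1 := by
            have := ha r0; simpa [hu'] using this
          refine ⟨⟨fun r => ?_, fun r hr => ?_⟩, by omega⟩
          · by_cases hrr : r = r0
            · subst hrr; omega
            · have := ha r; simpa [hu', hrr] using this
          · have hrr : r ≠ r0 := by rintro rfl; exact hr0 hr
            have := hb r hr; simpa [hu', hrr] using this
        · rintro ⟨⟨ha, hb⟩, hc⟩
          have har0 := ha r0
          refine ⟨fun r => ?_, fun r hr => ?_⟩
          · by_cases hrr : r = r0
            · subst hrr; simp only [hu', if_pos rfl]; omega
            · have := ha r; simpa [hu', hrr] using this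
          · have hrr : r ≠ r0 := by rintro rfl; exact hr0 hr
            simp only [hu', if_neg hrr]
            exact hb r hr
      have hadd := Finset.sum_filter_add_sum_filter_not
        (F.filter (fun m => (∀ r, digit d t m r ≤ u r) ∧ ∀ r ∈ S, digit d t m r = u r))
        (fun m => digit d t m r0 = u r0) (coef d t 1 f)
      rw [Finset.filter_filter, Finset.filter_filter] at hadd
      rw [h1, h2, eq_sub_iff_add_eq]
      exact hadd
    rw [hL, ih u hu (fun r hr => hu1 r (Finset.mem_insert_of_mem hr)), ih u' hu'le hu'1,
      Finset.sum_powerset_insert hr0]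
    have hterm : ∀ T ∈ S.powerset, ((-1:ℝ)^(insert r0 T).card *
        ((t:ℝ) * (f (fun r => ((u r - if r ∈ insert r0 T then 1 else 0 : ℕ) : ℝ)/t)
          - f (fun _ => 0))))
        = -(((-1:ℝ)^T.card *
            ((t:ℝ) * (f (fun r => ((u' r - if r ∈ T then 1 else 0 : ℕ) : ℝ)/t)
              - f (fun _ => 0))))) := by
      intro T hT
      have hT' : T ⊆ S := Finset.mem_powerset.mp hT
      have hr0T : r0 ∉ T := fun h => hr0 (hT' h)
      have hv : (fun r => ((u r - if r ∈ insert r0 T then 1 else 0 : ℕ) : ℝ)/t)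
          = (fun r => ((u' r - if r ∈ T then 1 else 0 : ℕ) : ℝ)/t) := by
        funext r
        by_cases hrr : r = r0
        · subst hrr
          simp [hu', hr0T]
        · by_cases hrT : r ∈ T <;> simp [hu', hrr, hrT, Finset.mem_insert]
      rw [hv, Finset.card_insert_of_notMem hr0T, pow_succ]
      ring
    rw [Finset.sum_congr rfl hterm, Finset.sum_neg_distrib]
    ring

/-- the ReLU profile of a g-unit -/
def phi (d t m : ℕ) (x : Fin d → ℝ) : ℝ :=
  relu ((∑ r : Fin d, -(1:ℝ) * relu (-(x r) + gridPt d t m r)) + 1 / t)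

lemma gHat_eq_phi (d t : ℕ) (f : (Fin d → ℝ) → ℝ) (m : ℕ) (x : Fin d → ℝ) :
    gHat d t 1 f m x = coef d t 1 f m * phi d t m x := rfl

lemma phi_of_le (d t i m : ℕ) (ht : 1 ≤ t) (x : Fin d → ℝ) (hx : x ∈ cellStar d t i)
    (h : ∀ r, digit d t m r ≤ digit d t i r) : phi d t m x = 1 / t := by
  have ht' : (0:ℝ) < t := by exact_mod_cast Nat.lt_of_lt_of_le Nat.zero_lt_one ht
  unfold phi
  have h0 : ∀ r : Fin d, -(1:ℝ) * relu (-(x r) + gridPt d t m r) = 0 := by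
    intro r
    rw [relu_of_nonpos, mul_zero]
    have h1 := (hx r).1
    have h2 : gridPt d t m r ≤ gridPt d t i r := by
      unfold gridPt
      apply div_le_div_of_nonneg_right _ (le_of_lt ht')
      exact_mod_cast h r
    linarith
  rw [Finset.sum_congr rfl (fun r _ => h0 r), Finset.sum_const_zero, zero_add,
    relu_of_nonneg (by positivity)]

lemma phi_of_big (d t i m : ℕ) (ht : 1 ≤ t) (x : Fin d → ℝ) (hx : x ∈ cellStar d t i)
    (h : ∃ r, digit d t i r + 2 ≤ digit d t m r) : phi d t m x = 0 := by
  have ht' : (0:ℝ) < t := by exact_mod_cast Nat.lt_of_lt_of_le Nat.zero_lt_one ht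
  obtain ⟨r0, hr0⟩ := h
  apply relu_of_nonpos
  have hterm : (1:ℝ)/t ≤ relu (-(x r0) + gridPt d t m r0) := by
    apply le_trans _ (le_relu _)
    have h1 := (hx r0).2
    have h2 : ((digit d t i r0 : ℝ) + 2)/t ≤ (digit d t m r0 : ℝ)/t := by
      apply div_le_div_of_nonneg_right _ (le_of_lt ht')
      exact_mod_cast hr0
    unfold gridPt
    unfold gridPt at h1
    have h3 : x r0 ≤ ((digit d t i r0 : ℝ) + 1)/t := by
      rw [add_div]; linarith
    calc (1:ℝ)/t = -(((digit d t i r0 : ℝ) + 1)/t) + ((digit d t i r0 : ℝ) + 2)/t := by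
          ring
      _ ≤ -(x r0) + (digit d t m r0 : ℝ)/t := by linarith
  have hsum : (1:ℝ)/t ≤ ∑ r : Fin d, relu (-(x r) + gridPt d t m r) :=
    le_trans hterm (Finset.single_le_sum
      (f := fun r => relu (-(x r) + gridPt d t m r))
      (fun r _ => relu_nonneg _) (Finset.mem_univ r0))
  have hneg : ∑ r : Fin d, -(1:ℝ) * relu (-(x r) + gridPt d t m r)
      = -∑ r : Fin d, relu (-(x r) + gridPt d t m r) := by
    rw [← Finset.sum_neg_distrib]
    apply Finset.sum_congr rfl; intro r _; ring
  rw [hneg]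
  linarith

/-- the common profile of all active units in fiber `S` over cell `i` -/
def psi (d t i : ℕ) (S : Finset (Fin d)) (x : Fin d → ℝ) : ℝ :=
  relu (1/t - ∑ r ∈ S, relu (((digit d t i r : ℝ) + 1)/t - x r))

lemma phi_eq_psi (d t i m : ℕ) (ht : 1 ≤ t) (S : Finset (Fin d)) (x : Fin d → ℝ)
    (hx : x ∈ cellStar d t i)
    (hS : ∀ r ∈ S, digit d t m r = digit d t i r + 1)
    (hS' : ∀ r ∉ S, digit d t m r ≤ digit d t i r) :
    phi d t m x = psi d t i S x := by
  have ht' : (0:ℝ) < t := by exact_mod_cast Nat.lt_of_lt_of_le Nat.zero_lt_one ht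
  unfold phi psi
  congr 1
  have hzero : ∀ r ∈ (Finset.univ : Finset (Fin d)), r ∉ S →
      -(1:ℝ) * relu (-(x r) + gridPt d t m r) = 0 := by
    intro r _ hr
    rw [relu_of_nonpos, mul_zero]
    have h1 := (hx r).1
    have h2 : gridPt d t m r ≤ gridPt d t i r := by
      unfold gridPt
      apply div_le_div_of_nonneg_right _ (le_of_lt ht')
      exact_mod_cast hS' r hr
    linarith
  rw [← Finset.sum_subset (Finset.subset_univ S) hzero]
  have hEq : ∀ r ∈ S, -(1:ℝ) * relu (-(x r) + gridPt d t m r)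
      = -relu (((digit d t i r : ℝ) + 1)/t - x r) := by
    intro r hr
    have : gridPt d t m r = ((digit d t i r : ℝ) + 1)/t := by
      unfold gridPt
      rw [hS r hr]
      push_cast
      ring
    rw [this]
    have harg : -(x r) + ((digit d t i r : ℝ) + 1)/t = ((digit d t i r : ℝ) + 1)/t - x r := by
      ring
    rw [harg]
    ring
  rw [Finset.sum_congr rfl hEq, Finset.sum_neg_distrib]
  ring

lemma psi_mem (d t i : ℕ) (ht : 1 ≤ t) (S : Finset (Fin d)) (x : Fin d → ℝ) :
    0 ≤ psi d t i S x ∧ psi d t i S x ≤ 1/t := by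
  have ht' : (0:ℝ) < t := by exact_mod_cast Nat.lt_of_lt_of_le Nat.zero_lt_one ht
  constructor
  · exact relu_nonneg _
  · have h1 : (0:ℝ) ≤ ∑ r ∈ S, relu (((digit d t i r : ℝ) + 1)/t - x r) :=
      Finset.sum_nonneg (fun r _ => relu_nonneg _)
    calc psi d t i S x ≤ relu (1/t) := relu_mono (by linarith)
      _ = 1/t := relu_of_nonneg (by positivity)

lemma G_bound (d t : ℕ) (hd : 1 ≤ d) (hd3 : d ≤ 3) (ht : 1 ≤ t) (ρ : ℝ) (hρ : 0 ≤ ρ)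
    (f : (Fin d → ℝ) → ℝ) (hf : LipOneNorm d ρ (Set.Icc 0 1) f)
    (S : Finset (Fin d)) (hS : S.Nonempty) (u : Fin d → ℕ) (hu : ∀ r, u r ≤ t)
    (hu1 : ∀ r ∈ S, 1 ≤ u r) :
    |∑ T ∈ S.powerset, (-1:ℝ)^T.card *
        ((t:ℝ) * (f (fun r => ((u r - if r ∈ T then 1 else 0 : ℕ) : ℝ)/t) - f (fun _ => 0)))|
      ≤ 4 * ρ := by
  classical
  have ht' : (0:ℝ) < t := by exact_mod_cast Nat.lt_of_lt_of_le Nat.zero_lt_one ht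
  obtain ⟨r0, hr0⟩ := hS
  have hr0e : r0 ∉ S.erase r0 := Finset.notMem_erase r0 S
  have hins : insert r0 (S.erase r0) = S := Finset.insert_erase hr0
  set v : Finset (Fin d) → (Fin d → ℝ) :=
    fun T r => ((u r - if r ∈ T then 1 else 0 : ℕ) : ℝ)/t with hv
  have hmem : ∀ T : Finset (Fin d), v T ∈ Set.Icc (0 : Fin d → ℝ) 1 := by
    intro T
    rw [Set.mem_Icc]
    constructor <;> intro r
    · simp only [hv, Pi.zero_apply]
      positivity
    · simp only [hv, Pi.one_apply]
      rw [div_le_one ht']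
      have h1 : (u r - if r ∈ T then 1 else 0 : ℕ) ≤ t := le_trans (Nat.sub_le _ _) (hu r)
      exact_mod_cast h1
  rw [← hins, Finset.sum_powerset_insert hr0e, ← Finset.sum_add_distrib]
  have hpair : ∀ T ∈ (S.erase r0).powerset,
      |(-1:ℝ)^T.card * ((t:ℝ) * (f (v T) - f (fun _ => 0)))
        + (-1:ℝ)^(insert r0 T).card * ((t:ℝ) * (f (v (insert r0 T)) - f (fun _ => 0)))| ≤ ρ := by
    intro T hT
    have hT' : T ⊆ S.erase r0 := Finset.mem_powerset.mp hT
    have hr0T : r0 ∉ T := fun h => hr0e (hT' h)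
    have hcard : (insert r0 T).card = T.card + 1 := Finset.card_insert_of_notMem hr0T
    have hcomb : (-1:ℝ)^T.card * ((t:ℝ) * (f (v T) - f (fun _ => 0)))
        + (-1:ℝ)^(insert r0 T).card * ((t:ℝ) * (f (v (insert r0 T)) - f (fun _ => 0)))
        = (-1:ℝ)^T.card * ((t:ℝ) * (f (v T) - f (v (insert r0 T)))) := by
      rw [hcard, pow_succ]
      ring
    rw [hcomb, abs_mul, abs_mul, abs_pow, abs_neg, abs_one, one_pow, one_mul,
      abs_of_pos ht']
    have hdist : ∑ r : Fin d, |v T r - v (insert r0 T) r| = 1/t := by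
      rw [Finset.sum_eq_single r0]
      · have h1 : 1 ≤ u r0 := hu1 r0 hr0
        have e1 : v T r0 = (u r0 : ℝ)/t := by simp [hv, hr0T]
        have e2 : v (insert r0 T) r0 = ((u r0 : ℝ) - 1)/t := by
          have hifs : (if r0 ∈ insert r0 T then 1 else 0 : ℕ) = 1 :=
            if_pos (Finset.mem_insert_self _ _)
          simp only [hv, hifs]
          rw [Nat.cast_sub h1, Nat.cast_one]
        rw [e1, e2]
        have e3 : (u r0 : ℝ)/t - ((u r0 : ℝ) - 1)/t = 1/t := by ring
        rw [e3, abs_of_nonneg (by positivity)]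
      · intro r _ hrr
        have : (if r ∈ T then 1 else 0 : ℕ) = (if r ∈ insert r0 T then 1 else 0 : ℕ) := by
          simp [Finset.mem_insert, hrr]
        simp only [hv, this, sub_self, abs_zero]
      · intro h; exact absurd (Finset.mem_univ r0) h
    have hlip := hf (v T) (hmem T) (v (insert r0 T)) (hmem (insert r0 T))
    rw [hdist] at hlip
    calc (t:ℝ) * |f (v T) - f (v (insert r0 T))| ≤ (t:ℝ) * (ρ * (1/t)) := by
          apply mul_le_mul_of_nonneg_left hlip (le_of_lt ht')
      _ = ρ := by field_simp
  calc |∑ T ∈ (S.erase r0).powerset, ((-1:ℝ)^T.card * ((t:ℝ) * (f (v T) - f (fun _ => 0)))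
        + (-1:ℝ)^(insert r0 T).card * ((t:ℝ) * (f (v (insert r0 T)) - f (fun _ => 0))))|
      ≤ ∑ T ∈ (S.erase r0).powerset, |(-1:ℝ)^T.card * ((t:ℝ) * (f (v T) - f (fun _ => 0)))
        + (-1:ℝ)^(insert r0 T).card * ((t:ℝ) * (f (v (insert r0 T)) - f (fun _ => 0)))| :=
      Finset.abs_sum_le_sum_abs _ _
    _ ≤ ∑ _T ∈ (S.erase r0).powerset, ρ := Finset.sum_le_sum hpair
    _ = ((S.erase r0).powerset.card : ℝ) * ρ := by rw [Finset.sum_const, nsmul_eq_mul]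
    _ ≤ 4 * ρ := by
      apply mul_le_mul_of_nonneg_right _ hρ
      rw [Finset.card_powerset]
      have hc : (S.erase r0).card ≤ 2 := by
        have h1 : (S.erase r0).card < S.card := Finset.card_erase_lt_of_mem hr0
        have h2 : S.card ≤ d := le_trans (Finset.card_le_univ S) (by simp)
        omega
      have h4 : (2:ℕ)^(S.erase r0).card ≤ 2^2 := Nat.pow_le_pow_right (by norm_num) hc
      have h5 : ((2:ℕ)^(S.erase r0).card : ℝ) ≤ ((2:ℕ)^2 : ℝ) := by exact_mod_cast h4
      push_cast at h5 ⊢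
      norm_num at h5 ⊢
      linarith

theorem stmt_8' (d t : ℕ) (hd : 1 ≤ d) (hd3 : d ≤ 3) (ht : 1 ≤ t) (ρ : ℝ) (hρ : 0 ≤ ρ)
    (f : (Fin d → ℝ) → ℝ) (hf : LipOneNorm d ρ (Set.Icc 0 1) f) :
    ∀ i < (t + 1) ^ d, ∀ x ∈ cellStar d t i, ∀ x' ∈ cellStar d t i,
      |fHat d t 1 f x - fHat d t 1 f x'| ≤ 36 * ρ * d / t := by
  classical
  intro i hi x hx x' hx'
  have ht' : (0:ℝ) < t := by exact_mod_cast Nat.lt_of_lt_of_le Nat.zero_lt_one ht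
  set F := Finset.Icc 1 ((t+1)^d - 1) with hFdef
  have h1 : fHat d t 1 f x = f (fun _ => 0) + ∑ m ∈ F, coef d t 1 f m * phi d t m x := by
    unfold fHat
    rw [Finset.sum_congr rfl (fun m _ => gHat_eq_phi d t f m x)]
  have h2 : fHat d t 1 f x' = f (fun _ => 0) + ∑ m ∈ F, coef d t 1 f m * phi d t m x' := by
    unfold fHat
    rw [Finset.sum_congr rfl (fun m _ => gHat_eq_phi d t f m x')]
  have hexp : fHat d t 1 f x - fHat d t 1 f x'
      = ∑ m ∈ F, coef d t 1 f m * (phi d t m x - phi d t m x') := by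
    calc fHat d t 1 f x - fHat d t 1 f x'
        = (∑ m ∈ F, coef d t 1 f m * phi d t m x)
          - (∑ m ∈ F, coef d t 1 f m * phi d t m x') := by rw [h1, h2]; ring
      _ = ∑ m ∈ F, (coef d t 1 f m * phi d t m x - coef d t 1 f m * phi d t m x') :=
        (Finset.sum_sub_distrib _ _).symm
      _ = ∑ m ∈ F, coef d t 1 f m * (phi d t m x - phi d t m x') := by
        apply Finset.sum_congr rfl; intros; ring
  set P : ℕ → Prop := fun m => (∀ r, digit d t m r ≤ digit d t i r + 1)
    ∧ ¬(∀ r, digit d t m r ≤ digit d t i r) with hPdef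
  have hactive : ∑ m ∈ F, coef d t 1 f m * (phi d t m x - phi d t m x')
      = ∑ m ∈ F.filter P, coef d t 1 f m * (phi d t m x - phi d t m x') := by
    symm
    apply Finset.sum_filter_of_ne
    intro m _ hne
    by_contra hPm
    apply hne
    by_cases hle : ∀ r, digit d t m r ≤ digit d t i r
    · rw [phi_of_le d t i m ht x hx hle, phi_of_le d t i m ht x' hx' hle, sub_self, mul_zero]
    · have hA : ¬(∀ r, digit d t m r ≤ digit d t i r + 1) := fun hA => hPm ⟨hA, hle⟩
      push_neg at hA
      obtain ⟨r, hr⟩ := hA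
      rw [phi_of_big d t i m ht x hx ⟨r, by omega⟩, phi_of_big d t i m ht x' hx' ⟨r, by omega⟩,
        sub_self, mul_zero]
  set g : ℕ → Finset (Fin d) :=
    fun m => Finset.univ.filter (fun r => digit d t m r = digit d t i r + 1) with hgdef
  have hfib : ∑ m ∈ F.filter P, coef d t 1 f m * (phi d t m x - phi d t m x')
      = ∑ S ∈ (Finset.univ : Finset (Fin d)).powerset,
          ∑ m ∈ (F.filter P).filter (fun m => g m = S),
            coef d t 1 f m * (phi d t m x - phi d t m x') :=
    (Finset.sum_fiberwise_of_maps_to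
      (fun m _ => Finset.mem_powerset.mpr (Finset.filter_subset _ _)) _).symm
  have hSbound : ∀ S ∈ (Finset.univ : Finset (Fin d)).powerset,
      |∑ m ∈ (F.filter P).filter (fun m => g m = S),
          coef d t 1 f m * (phi d t m x - phi d t m x')|
        ≤ 4 * ρ * (1/t) := by
    intro S _
    have hmem : ∀ m ∈ (F.filter P).filter (fun m => g m = S),
        (∀ r ∈ S, digit d t m r = digit d t i r + 1)
          ∧ (∀ r ∉ S, digit d t m r ≤ digit d t i r) := by
      intro m hm
      rw [Finset.mem_filter] at hm
      obtain ⟨hm1, hgS⟩ := hm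
      rw [Finset.mem_filter] at hm1
      obtain ⟨hmF, hA, hB⟩ := hm1
      constructor
      · intro r hr
        rw [← hgS] at hr
        simpa [hgdef] using hr
      · intro r hr
        rw [← hgS] at hr
        have h3 : ¬(digit d t m r = digit d t i r + 1) := by simpa [hgdef] using hr
        have h4 := hA r
        omega
    have hterm : ∀ m ∈ (F.filter P).filter (fun m => g m = S),
        coef d t 1 f m * (phi d t m x - phi d t m x')
        = coef d t 1 f m * (psi d t i S x - psi d t i S x') := by
      intro m hm
      obtain ⟨hs1, hs2⟩ := hmem m hm
      rw [phi_eq_psi d t i m ht S x hx hs1 hs2, phi_eq_psi d t i m ht S x' hx' hs1 hs2]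
    rw [Finset.sum_congr rfl hterm, ← Finset.sum_mul, abs_mul]
    have hpsi : |psi d t i S x - psi d t i S x'| ≤ 1/t := by
      obtain ⟨ha, hb⟩ := psi_mem d t i ht S x
      obtain ⟨hc, hd'⟩ := psi_mem d t i ht S x'
      rw [abs_le]; constructor <;> linarith
    have hcoefsum : |∑ m ∈ (F.filter P).filter (fun m => g m = S), coef d t 1 f m| ≤ 4 * ρ := by
      by_cases hS0 : S = ∅
      · have hemp : (F.filter P).filter (fun m => g m = S) = ∅ := by
          rw [Finset.filter_eq_empty_iff]
          intro m hm
          rw [Finset.mem_filter] at hm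
          obtain ⟨_, hA, hB⟩ := hm
          intro hgm
          push_neg at hB
          obtain ⟨r, hr⟩ := hB
          have h5 : r ∈ g m := by
            simp only [hgdef, Finset.mem_filter, Finset.mem_univ, true_and]
            have := hA r; omega
          rw [hgm, hS0] at h5
          simp at h5
        rw [hemp, Finset.sum_empty, abs_zero]
        positivity
      · by_cases hSt : ∃ r ∈ S, digit d t i r = t
        · have hemp : (F.filter P).filter (fun m => g m = S) = ∅ := by
            rw [Finset.filter_eq_empty_iff]
            intro m _ hgm
            obtain ⟨r, hrS, hrt⟩ := hSt
            have hr : r ∈ g m := by rw [hgm]; exact hrS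
            have h5 : digit d t m r = digit d t i r + 1 := by
              simpa [hgdef] using hr
            have h6 := digit_le d t m r
            omega
          rw [hemp, Finset.sum_empty, abs_zero]
          positivity
        · push_neg at hSt
          set u : Fin d → ℕ := fun r => digit d t i r + if r ∈ S then 1 else 0 with hudef
          have hut : ∀ r, u r ≤ t := by
            intro r
            simp only [hudef]
            split
            case isTrue h => have := hSt r h; have := digit_le d t i r; omega
            case isFalse h => have := digit_le d t i r; omega
          have hu1 : ∀ r ∈ S, 1 ≤ u r := by
            intro r hr
            simp only [hudef, if_pos hr]
            omega
          have hSne : S.Nonempty := Finset.nonempty_iff_ne_empty.mpr hS0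
          have hfe : (F.filter P).filter (fun m => g m = S)
              = F.filter (fun m => (∀ r, digit d t m r ≤ u r) ∧ ∀ r ∈ S, digit d t m r = u r) := by
            rw [Finset.filter_filter]
            apply Finset.filter_congr
            intro m _
            constructor
            · rintro ⟨⟨hA, hB⟩, hgm⟩
              constructor
              · intro r
                by_cases hrS : r ∈ S
                · have h5 : digit d t m r = digit d t i r + 1 := by
                    rw [← hgm] at hrS
                    simpa [hgdef] using hrS
                  simp only [hudef, if_pos hrS]
                  omega
                · have hne : digit d t m r ≠ digit d t i r + 1 := by
                    intro hEq
                    apply hrS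
                    rw [← hgm]
                    simp only [hgdef, Finset.mem_filter, Finset.mem_univ, true_and]
                    exact hEq
                  have h6 := hA r
                  simp only [hudef, if_neg hrS]
                  omega
              · intro r hrS
                have h5 : digit d t m r = digit d t i r + 1 := by
                  rw [← hgm] at hrS
                  simpa [hgdef] using hrS
                simp only [hudef, if_pos hrS]
                exact h5
            · rintro ⟨hle, hEqS⟩
              obtain ⟨r1, hr1⟩ := hSne
              have hval : ∀ r ∈ S, digit d t m r = digit d t i r + 1 := by
                intro r hr
                have := hEqS r hr
                simp only [hudef, if_pos hr] at this
                exact this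
              refine ⟨⟨fun r => ?_, fun hB => ?_⟩, ?_⟩
              · have := hle r
                simp only [hudef] at this
                split at this <;> omega
              · have h5 := hB r1
                have h6 := hval r1 hr1
                omega
              · apply Finset.ext
                intro r
                simp only [hgdef, Finset.mem_filter, Finset.mem_univ, true_and]
                constructor
                · intro hEq
                  by_contra hrS
                  have := hle r
                  simp only [hudef, if_neg hrS] at this
                  omega
                · exact hval r
          rw [hfe, ie_sum d t ht f S u hut hu1]
          exact G_bound d t hd hd3 ht ρ hρ f hf S hSne u hut hu1
    calc |∑ m ∈ (F.filter P).filter (fun m => g m = S), coef d t 1 f m|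
          * |psi d t i S x - psi d t i S x'|
        ≤ (4 * ρ) * (1/t) := by
          apply mul_le_mul hcoefsum hpsi (abs_nonneg _) (by positivity)
      _ = 4 * ρ * (1/t) := rfl
  rw [hexp, hactive, hfib]
  have hcard : ((Finset.univ : Finset (Fin d)).powerset.card : ℝ) = 2^d := by
    rw [Finset.card_powerset, Finset.card_univ, Fintype.card_fin]
    push_cast
    ring
  have h2d : ((2:ℝ))^d ≤ 8 := by
    have h4 : (2:ℕ)^d ≤ 2^3 := Nat.pow_le_pow_right (by norm_num) hd3
    have h5 : ((2:ℕ)^d : ℝ) ≤ ((2:ℕ)^3 : ℝ) := by exact_mod_cast h4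
    push_cast at h5
    norm_num at h5
    linarith
  have hd1 : (1:ℝ) ≤ d := by exact_mod_cast hd
  calc |∑ S ∈ (Finset.univ : Finset (Fin d)).powerset,
        ∑ m ∈ (F.filter P).filter (fun m => g m = S),
          coef d t 1 f m * (phi d t m x - phi d t m x')|
      ≤ ∑ S ∈ (Finset.univ : Finset (Fin d)).powerset,
        |∑ m ∈ (F.filter P).filter (fun m => g m = S),
          coef d t 1 f m * (phi d t m x - phi d t m x')| := Finset.abs_sum_le_sum_abs _ _
    _ ≤ ∑ _S ∈ (Finset.univ : Finset (Fin d)).powerset, 4 * ρ * (1/t) :=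
      Finset.sum_le_sum hSbound
    _ = ((Finset.univ : Finset (Fin d)).powerset.card : ℝ) * (4 * ρ * (1/t)) := by
      rw [Finset.sum_const, nsmul_eq_mul]
    _ ≤ 8 * (4 * ρ * (1/t)) := by
      rw [hcard]
      apply mul_le_mul_of_nonneg_right h2d (by positivity)
    _ = 32 * (ρ/t) := by ring
    _ ≤ 36 * (d:ℝ) * (ρ/t) := by nlinarith [div_nonneg hρ (le_of_lt ht')]
    _ = 36 * ρ * d / t := by ring

end Stmt8

/-- Let d ≤ 3 and M = 1. If f : [0,1]^d → ℝ is ρ-Lipschitz in 1-norm,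
then for every t ≥ 1, index i ∈ {0,…,k−1} and all x, x' ∈ C*_i:
|f̂(x) − f̂(x')| ≤ 36ρd/t. -/
theorem stmt_8 (d t : ℕ) (hd : 1 ≤ d) (hd3 : d ≤ 3) (ht : 1 ≤ t) (ρ : ℝ) (hρ : 0 ≤ ρ)
    (f : (Fin d → ℝ) → ℝ) (hf : LipOneNorm d ρ (Set.Icc 0 1) f) :
    ∀ i < (t + 1) ^ d, ∀ x ∈ cellStar d t i, ∀ x' ∈ cellStar d t i,
      |fHat d t 1 f x - fHat d t 1 f x'| ≤ 36 * ρ * d / t :=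
  Stmt8.stmt_8' d t hd hd3 ht ρ hρ f hf

end
end

section
/- For every function f : [0,1]^d → ℝ, every integer t ≥ 1, every M ≥ 1, all indices i ∈ {0,…,k−1} and j ∈ {1,…,k−1}, and every point x ∈ C_i: ĝ_j(x) = a_j/t if π^j_r ≤ π^i_r for all r ∈ {1,…,d}, and ĝ_j(x) = 0 otherwise. In particular every g-unit is constant on each inner cell C_i. -/
open Finset MeasureTheory

noncomputable section

/-
On the inner cell `C_i` every inner ReLU of `ĝ_j` is either switched off, when `π^j ≤ π^i`
coordinatewise, so that `ĝ_j = a_j σ(1/t) = a_j / t`; or some coordinate has `π^j_r ≥ π^i_r + 1`,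
and then the gap `π^j_r/t - x_r ≥ 1/(Mt)` left by the inner cell makes that single term
`-M σ(π^j_r/t - x_r) ≤ -1/t`, which kills the outer ReLU.
-/

theorem relu_of_nonpos {z : ℝ} (hz : z ≤ 0) : relu z = 0 := max_eq_left hz

theorem relu_of_nonneg {z : ℝ} (hz : 0 ≤ z) : relu z = z := max_eq_right hz

theorem relu_nonneg (z : ℝ) : 0 ≤ relu z := le_max_left _ _

theorem le_relu (z : ℝ) : z ≤ relu z := le_max_right _ _

theorem gUnit_eq_div_of_gridPt_le {d t : ℕ} {M a : ℝ} {i : ℕ} {x : Fin d → ℝ}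
    (hx : ∀ r, gridPt d t i r ≤ x r) : gUnit d t M a i x = a / t := by
  have hoff : ∀ r, relu (-(x r) + gridPt d t i r) = 0 := fun r =>
    relu_of_nonpos (by linarith [hx r])
  simp only [gUnit, hoff, mul_zero, Finset.sum_const_zero, zero_add]
  rw [relu_of_nonneg (by positivity), mul_one_div]

theorem gUnit_eq_zero_of_exists_le {d t : ℕ} {M a : ℝ} {i : ℕ} {x : Fin d → ℝ} (hM : 0 ≤ M)
    (hx : ∃ r, 1 / t ≤ M * (gridPt d t i r - x r)) : gUnit d t M a i x = 0 := by
  obtain ⟨r₀, hr₀⟩ := hx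
  have hterm : ∀ r, -M * relu (-(x r) + gridPt d t i r) ≤ 0 := fun r => by
    nlinarith [relu_nonneg (-(x r) + gridPt d t i r)]
  have hterm₀ : -M * relu (-(x r₀) + gridPt d t i r₀) ≤ -(1 / t) := by
    nlinarith [le_relu (-(x r₀) + gridPt d t i r₀)]
  have hsum : ∑ r, -M * relu (-(x r) + gridPt d t i r) ≤ -(1 / t) := calc
    _ = -M * relu (-(x r₀) + gridPt d t i r₀)
          + ∑ r ∈ Finset.univ.erase r₀, -M * relu (-(x r) + gridPt d t i r) :=
        (Finset.add_sum_erase _ _ (Finset.mem_univ r₀)).symm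
    _ ≤ -(1 / t) + 0 := add_le_add hterm₀ (Finset.sum_nonpos fun r _ => hterm r)
    _ = -(1 / t) := add_zero _
  rw [gUnit, relu_of_nonpos (by linarith), mul_zero]

theorem gridPt_le_gridPt {d t i j : ℕ} {r : Fin d} (h : digit d t j r ≤ digit d t i r) :
    gridPt d t j r ≤ gridPt d t i r :=
  div_le_div_of_nonneg_right (by exact_mod_cast h) (Nat.cast_nonneg t)

theorem gridPt_add_one_div_le {d t i j : ℕ} {r : Fin d} (h : digit d t i r < digit d t j r) :
    gridPt d t i r + 1 / t ≤ gridPt d t j r := by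
  rw [gridPt, gridPt, ← add_div]
  exact div_le_div_of_nonneg_right (by exact_mod_cast h) (Nat.cast_nonneg t)

theorem one_div_le_mul_gridPt_sub {d t : ℕ} {M : ℝ} {i j : ℕ} {x : Fin d → ℝ} {r : Fin d}
    (hM : 0 < M) (hx : x ∈ cellInner d t M i) (h : digit d t i r < digit d t j r) :
    1 / t ≤ M * (gridPt d t j r - x r) := calc
  1 / t = M * (1 / (M * t)) := by rw [mul_one_div, div_mul_cancel_left₀ hM.ne', one_div]
  _ ≤ M * (gridPt d t j r - x r) := by
    gcongr
    linarith [(hx r).2, gridPt_add_one_div_le h]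

theorem stmt_9_general (d t : ℕ) (M : ℝ) (hM : 1 ≤ M)
    (f : (Fin d → ℝ) → ℝ) :
    ∀ i < (t + 1) ^ d, ∀ j, 1 ≤ j → j < (t + 1) ^ d → ∀ x ∈ cellInner d t M i,
      ((∀ r : Fin d, digit d t j r ≤ digit d t i r) →
        gHat d t M f j x = coef d t M f j / t) ∧
      (¬ (∀ r : Fin d, digit d t j r ≤ digit d t i r) →
        gHat d t M f j x = 0) := by
  intro i _ j _ _ x hx
  refine ⟨fun hle => gUnit_eq_div_of_gridPt_le fun r => ?_, fun hnot => ?_⟩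
  · exact (gridPt_le_gridPt (hle r)).trans (hx r).1
  · obtain ⟨r, hr⟩ := not_forall.1 hnot
    exact gUnit_eq_zero_of_exists_le (by linarith)
      ⟨r, one_div_le_mul_gridPt_sub (by linarith) hx (not_le.1 hr)⟩

/-- For every f, t ≥ 1, M ≥ 1, indices i ∈ {0,…,k−1} and j ∈ {1,…,k−1},
and every point x ∈ C_i: ĝ_j(x) = a_j/t if π^j_r ≤ π^i_r for all r, and ĝ_j(x) = 0
otherwise. In particular every g-unit is constant on each inner cell C_i. -/
theorem stmt_9 (d t : ℕ) (hd : 1 ≤ d) (ht : 1 ≤ t) (M : ℝ) (hM : 1 ≤ M)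
    (f : (Fin d → ℝ) → ℝ) :
    ∀ i < (t + 1) ^ d, ∀ j, 1 ≤ j → j < (t + 1) ^ d → ∀ x ∈ cellInner d t M i,
      ((∀ r : Fin d, digit d t j r ≤ digit d t i r) →
        gHat d t M f j x = coef d t M f j / t) ∧
      (¬ (∀ r : Fin d, digit d t j r ≤ digit d t i r) →
        gHat d t M f j x = 0) :=
  stmt_9_general d t M hM f

end
end

section
/- No set of 2d̄ + 1 points in [0,1]^{d̄} is pseudo-shattered by H^S, and no set of 2d̄ + 1 points in [0,1]^{d̄} is pseudo-shattered by H^C; consequently the pseudo-dimensions of H^S and of H^C are both at most 2d̄. -/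
open MeasureTheory Finset
open scoped Classical

noncomputable section

/-- The set of queries Q = {(c, r) ∈ [0,1]^{2d̄} : c_i + r_i ≤ 1 ∀i}. -/
def Qset (db : ℕ) : Set ((Fin db → ℝ) × (Fin db → ℝ)) :=
  {q | ∀ i, 0 ≤ q.1 i ∧ q.1 i ≤ 1 ∧ 0 ≤ q.2 i ∧ q.2 i ≤ 1 ∧ q.1 i + q.2 i ≤ 1}

/-- Indicator h^C_q(p) of a point p matching the range predicate of query q = (c, r). -/
def hC (db : ℕ) (q : (Fin db → ℝ) × (Fin db → ℝ)) (p : Fin db → ℝ) : ℝ :=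
  if ∀ i, q.1 i ≤ p i ∧ p i < q.1 i + q.2 i then 1 else 0

/-- h^S_q(p) = p_m if p matches the range predicate of q = (c, r), and 0 otherwise. -/
def hS (db : ℕ) (m : Fin db) (q : (Fin db → ℝ) × (Fin db → ℝ)) (p : Fin db → ℝ) : ℝ :=
  if ∀ i, q.1 i ≤ p i ∧ p i < q.1 i + q.2 i then p m else 0

/-- Observed COUNT query function f^C_D(q) = Σ_{j=1}^n h^C_q(p^j). -/
def fCD (db n : ℕ) (D : Fin n → (Fin db → ℝ)) (q : (Fin db → ℝ) × (Fin db → ℝ)) : ℝ :=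
  ∑ j : Fin n, hC db q (D j)

/-- Observed SUM query function f^S_D(q) = Σ_{j=1}^n h^S_q(p^j). -/
def fSD (db n : ℕ) (m : Fin db) (D : Fin n → (Fin db → ℝ))
    (q : (Fin db → ℝ) × (Fin db → ℝ)) : ℝ :=
  ∑ j : Fin n, hS db m q (D j)

/-- Distribution COUNT query function f^C_χ(q) = n·E_{p∼χ}[h^C_q(p)]. -/
def fCchi (db n : ℕ) (χ : Measure (Fin db → ℝ)) (q : (Fin db → ℝ) × (Fin db → ℝ)) : ℝ :=
  (n : ℝ) * ∫ p, hC db q p ∂χ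

/-- Distribution SUM query function f^S_χ(q) = n·E_{p∼χ}[h^S_q(p)]. -/
def fSchi (db n : ℕ) (m : Fin db) (χ : Measure (Fin db → ℝ))
    (q : (Fin db → ℝ) × (Fin db → ℝ)) : ℝ :=
  (n : ℝ) * ∫ p, hS db m q p ∂χ

/-- The class H^C = {h^C_q : q = (c,r), c, r ∈ [0,1]^{d̄}}. -/
def HCclass (db : ℕ) : Set ((Fin db → ℝ) → ℝ) :=
  {h | ∃ c r : Fin db → ℝ, (∀ i, 0 ≤ c i ∧ c i ≤ 1 ∧ 0 ≤ r i ∧ r i ≤ 1) ∧ h = hC db (c, r)}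

/-- The class H^S = {h^S_q : q = (c,r), c, r ∈ [0,1]^{d̄}}. -/
def HSclass (db : ℕ) (m : Fin db) : Set ((Fin db → ℝ) → ℝ) :=
  {h | ∃ c r : Fin db → ℝ, (∀ i, 0 ≤ c i ∧ c i ≤ 1 ∧ 0 ≤ r i ∧ r i ≤ 1) ∧ h = hS db m (c, r)}

/-- A finite set I is pseudo-shattered by a class H of real-valued functions if for some
g : I → ℝ, for every J ⊆ I there is h_J ∈ H with h_J(x) ≤ g(x) on J and h_J(x) > g(x) on
I \ J. -/
def PseudoShatters (db : ℕ) (H : Set ((Fin db → ℝ) → ℝ)) (I : Finset (Fin db → ℝ)) : Prop :=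
  ∃ g : (Fin db → ℝ) → ℝ, ∀ J ⊆ I, ∃ h ∈ H,
    (∀ x ∈ J, h x ≤ g x) ∧ ∀ x ∈ I \ J, g x < h x

/-- There is a point of I that is nowhere strictly extremal. -/
lemma exists_nonextremal (db : ℕ) (I : Finset (Fin db → ℝ)) (hcard : 2 * db < I.card) :
    ∃ p ∈ I, ∀ i : Fin db, ∃ a ∈ I, ∃ b ∈ I, a ≠ p ∧ b ≠ p ∧ a i ≤ p i ∧ p i ≤ b i := by
  have hne : I.Nonempty := Finset.card_pos.mp (by omega)
  choose a ha hamin using fun i : Fin db => I.exists_min_image (fun x => x i) hne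
  choose b hb hbmax using fun i : Fin db => I.exists_max_image (fun x => x i) hne
  set S : Finset (Fin db → ℝ) :=
    (Finset.univ.image a) ∪ (Finset.univ.image b) with hS
  have hScard : S.card ≤ 2 * db := by
    calc S.card ≤ (Finset.univ.image a).card + (Finset.univ.image b).card :=
          Finset.card_union_le _ _
      _ ≤ db + db := by
          gcongr <;> exact (Finset.card_image_le).trans (by simp)
      _ = 2 * db := by ring
  have hnsub : ¬ I ⊆ S := fun h => by
    have := Finset.card_le_card h; omega
  obtain ⟨p, hpI, hpS⟩ := Finset.not_subset.mp hnsub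
  refine ⟨p, hpI, fun i => ⟨a i, ha i, b i, hb i, ?_, ?_, hamin i p hpI, hbmax i p hpI⟩⟩
  · rintro rfl; exact hpS (Finset.mem_union_left _ (Finset.mem_image_of_mem a (Finset.mem_univ i)))
  · rintro rfl; exact hpS (Finset.mem_union_right _ (Finset.mem_image_of_mem b (Finset.mem_univ i)))

lemma no_shatter_boxes (db : ℕ) (I : Finset (Fin db → ℝ))
    (hcard : 2 * db < I.card)
    (v : (Fin db → ℝ) → ℝ) (hv0 : ∀ x ∈ I, 0 ≤ v x)
    (H : Set ((Fin db → ℝ) → ℝ))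
    (hH : ∀ h ∈ H, ∃ c r : Fin db → ℝ,
      h = fun p => if ∀ i, c i ≤ p i ∧ p i < c i + r i then v p else 0) :
    ¬ PseudoShatters db H I := by
  rintro ⟨g, hg⟩
  -- g ≥ 0 on I
  have hg0 : ∀ x ∈ I, 0 ≤ g x := by
    obtain ⟨h, hhH, hle, -⟩ := hg I (le_refl I)
    intro x hx
    obtain ⟨c, r, rfl⟩ := hH h hhH
    refine le_trans ?_ (hle x hx)
    by_cases hp : ∀ i, c i ≤ x i ∧ x i < c i + r i <;> simp [hp, hv0 x hx]
  -- g < v on I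
  have hgv : ∀ x ∈ I, g x < v x := by
    obtain ⟨h, hhH, -, hgt⟩ := hg ∅ (Finset.empty_subset I)
    intro x hx
    obtain ⟨c, r, rfl⟩ := hH h hhH
    have := hgt x (by simpa using hx)
    by_cases hp : ∀ i, c i ≤ x i ∧ x i < c i + r i
    · simpa [hp] using this
    · simp [hp] at this; exact absurd this (not_lt.mpr (hg0 x hx))
  obtain ⟨p, hpI, hpext⟩ := exists_nonextremal db I hcard
  obtain ⟨h, hhH, hle, hgt⟩ := hg {p} (Finset.singleton_subset_iff.mpr hpI)
  obtain ⟨c, r, rfl⟩ := hH h hhH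
  -- predicate fails at p
  have hnp : ¬ ∀ i, c i ≤ p i ∧ p i < c i + r i := by
    intro hp
    have := hle p (Finset.mem_singleton_self p)
    simp only [if_pos hp] at this
    linarith [hgv p hpI]
  -- predicate holds on I \ {p}
  have hin : ∀ x ∈ I, x ≠ p → ∀ i, c i ≤ x i ∧ x i < c i + r i := by
    intro x hx hxp
    have := hgt x (Finset.mem_sdiff.mpr ⟨hx, by simpa using hxp⟩)
    by_contra hcon
    simp only [hcon, if_neg] at this
    exact absurd this (not_lt.mpr (hg0 x hx))
  push_neg at hnp
  obtain ⟨i, hi⟩ := hnp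
  obtain ⟨a, haI, b, hbI, hap, hbp, hai, hbi⟩ := hpext i
  have hA := hin a haI hap i
  have hB := hin b hbI hbp i
  have h1 : c i + r i ≤ p i := hi (le_trans hA.1 hai)
  have h2 : p i < c i + r i := lt_of_le_of_lt hbi hB.2
  linarith


/-- No set of 2d̄ + 1 points in [0,1]^{d̄} is pseudo-shattered by H^S, and
none by H^C; consequently every finite subset of [0,1]^{d̄} pseudo-shattered by H^S or by H^C
has at most 2d̄ points, i.e. the pseudo-dimensions of H^S and H^C are both at most 2d̄. -/
theorem stmt_13 (db : ℕ) (hdb : 1 ≤ db) (m : Fin db) :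
    (∀ I : Finset (Fin db → ℝ), ↑I ⊆ Set.Icc (0 : Fin db → ℝ) 1 →
      I.card = 2 * db + 1 → ¬ PseudoShatters db (HSclass db m) I) ∧
    (∀ I : Finset (Fin db → ℝ), ↑I ⊆ Set.Icc (0 : Fin db → ℝ) 1 →
      I.card = 2 * db + 1 → ¬ PseudoShatters db (HCclass db) I) ∧
    (∀ I : Finset (Fin db → ℝ), ↑I ⊆ Set.Icc (0 : Fin db → ℝ) 1 →
      PseudoShatters db (HSclass db m) I → I.card ≤ 2 * db) ∧
    (∀ I : Finset (Fin db → ℝ), ↑I ⊆ Set.Icc (0 : Fin db → ℝ) 1 →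
      PseudoShatters db (HCclass db) I → I.card ≤ 2 * db) := by
  have key : ∀ (v : (Fin db → ℝ) → ℝ) (H : Set ((Fin db → ℝ) → ℝ)),
      (∀ h ∈ H, ∃ c r : Fin db → ℝ,
        h = fun p => if ∀ i, c i ≤ p i ∧ p i < c i + r i then v p else 0) →
      (∀ I : Finset (Fin db → ℝ), ↑I ⊆ Set.Icc (0 : Fin db → ℝ) 1 →
        (∀ x ∈ I, 0 ≤ v x) → 2 * db < I.card → ¬ PseudoShatters db H I) := by
    intro v H hH I _ hv0 hc
    exact no_shatter_boxes db I hc v hv0 H hH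
  have hHS : ∀ h ∈ HSclass db m, ∃ c r : Fin db → ℝ,
      h = fun p => if ∀ i, c i ≤ p i ∧ p i < c i + r i then p m else 0 := by
    rintro h ⟨c, r, -, rfl⟩; exact ⟨c, r, rfl⟩
  have hHC : ∀ h ∈ HCclass db, ∃ c r : Fin db → ℝ,
      h = fun p => if ∀ i, c i ≤ p i ∧ p i < c i + r i then (1 : ℝ) else 0 := by
    rintro h ⟨c, r, -, rfl⟩; exact ⟨c, r, rfl⟩
  refine ⟨?_, ?_, ?_, ?_⟩
  · intro I hI hc
    exact key _ _ hHS I hI (fun x hx => (hI hx).1 m) (by omega)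
  · intro I hI hc
    exact key _ _ hHC I hI (fun x hx => zero_le_one) (by omega)
  · intro I hI hsh
    by_contra hc
    exact key _ _ hHS I hI (fun x hx => (hI hx).1 m) (by omega) hsh
  · intro I hI hsh
    by_contra hc
    exact key _ _ hHC I hI (fun x hx => zero_le_one) (by omega) hsh

end
end
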